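/- Let X, Y be (k+1)-element singular subsets of Π_n with k ≤ n−2, |X ∩ Y| ≤ k−1, and suppose there is i ∈ X \ Y collinear to all points of Y and j ∈ Y \ X collinear to all points of X. Then there exists a (k+1)-element singular subset X' adjacent to X in Γ_k(n) with |X' ∩ Y| = |X ∩ Y| + 1 and still containing a point of X' \ Y collinear to all points of Y. -/

import Mathlib

open Finset

/-- The point set J = {±1, …, ±n} of the thin polar space Π_n. -/
noncomputable def polarJ (n : ℕ) : Finset ℤ := (Finset.Icc (-(n : ℤ)) (n : ℤ)).erase 0

/-- A subset of J is singular iff it contains no pair {i, -i}. -/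
def Sing (n : ℕ) (S : Finset ℤ) : Prop := S ⊆ polarJ n ∧ ∀ i ∈ S, -i ∉ S

/-!
Write `X' = (X \ {a}) ∪ {j}`, where `j ∈ Y \ X` is collinear to all of `X` and `a ∈ X \ Y` is a
point other than the given `i`; such an `a` exists because `|X \ Y| = k + 1 - |X ∩ Y| ≥ 2`.
Then `X ∪ X' = X ∪ {j}` is singular, `X'` meets `Y` in `(X ∩ Y) ∪ {j}`, and `i` survives in
`X' \ Y`.
-/

section Exchange

variable {α : Type*} [DecidableEq α] {X Y : Finset α} {a j : α}

theorem card_insert_erase_of_notMem (ha : a ∈ X) (hj : j ∉ X) :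
    #(insert j (X.erase a)) = #X := by
  rw [card_insert_of_notMem (fun h => hj (mem_of_mem_erase h)), card_erase_add_one ha]

theorem inter_insert_erase_of_notMem (hj : j ∉ X) : X ∩ insert j (X.erase a) = X.erase a := by
  rw [inter_insert_of_notMem hj, inter_eq_right.mpr (erase_subset a X)]

theorem union_insert_erase : X ∪ insert j (X.erase a) = insert j X := by
  rw [union_insert, union_eq_left.mpr (erase_subset a X)]

theorem insert_erase_inter_of_notMem (hjY : j ∈ Y) (haY : a ∉ Y) :
    insert j (X.erase a) ∩ Y = insert j (X ∩ Y) := by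
  rw [insert_inter_of_mem hjY, erase_inter, erase_eq_of_notMem (fun h => haY (mem_inter.mp h).2)]

end Exchange

section Singular

variable {n : ℕ} {S T : Finset ℤ} {j : ℤ}

theorem Sing.mono (hT : Sing n T) (hST : S ⊆ T) : Sing n S :=
  ⟨hST.trans hT.1, fun i hi hni => hT.2 i (hST hi) (hST hni)⟩

theorem Sing.insert (hS : Sing n S) (hj : j ∈ polarJ n) (hjS : -j ∉ S) :
    Sing n (insert j S) := by
  have hj0 : j ≠ 0 := ne_of_mem_erase hj
  refine ⟨insert_subset hj hS.1, fun i hi hni => ?_⟩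
  rcases mem_insert.mp hi with rfl | hi <;> rcases mem_insert.mp hni with hni | hni
  · omega
  · exact hjS hni
  · exact hjS (by rwa [show -j = i by omega])
  · exact hS.2 i hi hni

end Singular

theorem stmt16_general (n k : ℕ) (X Y : Finset ℤ)
    (hX : Sing n X) (hY : Sing n Y) (hXc : X.card = k + 1)
    (hint : (X ∩ Y).card + 1 ≤ k)
    (hp : ∃ i ∈ X \ Y, -i ∉ Y) (hq : ∃ j ∈ Y \ X, -j ∉ X) :
    ∃ X' : Finset ℤ, Sing n X' ∧ X'.card = k + 1 ∧ X ≠ X' ∧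
      (X ∩ X').card = k ∧ Sing n (X ∪ X') ∧
      (X' ∩ Y).card = (X ∩ Y).card + 1 ∧
      ∃ p ∈ X' \ Y, -p ∉ Y := by
  obtain ⟨i, hi, hiY⟩ := hp
  obtain ⟨j, hj, hjX⟩ := hq
  obtain ⟨hjY, hjnX⟩ := mem_sdiff.mp hj
  have hsdiff : 1 < #(X \ Y) := by
    have := card_sdiff_add_card_inter X Y
    omega
  obtain ⟨a, ha, hai⟩ := exists_mem_ne hsdiff i
  obtain ⟨haX, haY⟩ := mem_sdiff.mp ha
  have hU : Sing n (X ∪ insert j (X.erase a)) := by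
    rw [union_insert_erase]
    exact hX.insert (hY.1 hjY) hjX
  refine ⟨insert j (X.erase a), hU.mono subset_union_right, ?_, ?_, ?_, hU, ?_, i, ?_, hiY⟩
  · rw [card_insert_erase_of_notMem haX hjnX, hXc]
  · exact fun h => hjnX (h ▸ mem_insert_self j _)
  · rw [inter_insert_erase_of_notMem hjnX, card_erase_of_mem haX, hXc, Nat.add_sub_cancel]
  · rw [insert_erase_inter_of_notMem hjY haY,
      card_insert_of_notMem (fun h => hjnX (mem_inter.mp h).1)]
  · obtain ⟨hiX, hinY⟩ := mem_sdiff.mp hi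
    exact mem_sdiff.mpr ⟨mem_insert_of_mem (mem_erase.mpr ⟨hai.symm, hiX⟩), hinY⟩

/-- Inductive step of the distance formula: if |X ∩ Y| ≤ k-1, some point of X \ Y is
collinear to all of Y and some point of Y \ X is collinear to all of X, then there is a
vertex X' adjacent to X in Γ_k(n) with |X' ∩ Y| = |X ∩ Y| + 1 which still contains a
point of X' \ Y collinear to all points of Y. -/
theorem stmt16 (n k : ℕ) (hkn : k + 2 ≤ n) (X Y : Finset ℤ)
    (hX : Sing n X) (hY : Sing n Y) (hXc : X.card = k + 1) (hYc : Y.card = k + 1)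
    (hint : (X ∩ Y).card + 1 ≤ k)
    (hp : ∃ i ∈ X \ Y, -i ∉ Y) (hq : ∃ j ∈ Y \ X, -j ∉ X) :
    ∃ X' : Finset ℤ, Sing n X' ∧ X'.card = k + 1 ∧ X ≠ X' ∧
      (X ∩ X').card = k ∧ Sing n (X ∪ X') ∧
      (X' ∩ Y).card = (X ∩ Y).card + 1 ∧
      ∃ p ∈ X' \ Y, -p ∉ Y :=
  stmt16_general n k X Y hX hY hXc hint hp hq
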